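/- arXiv:2008.12297 — 2 statements merged into one kernel-verified Lean document; each statement's English description precedes it below -/
import Mathlib

section
/- Let σ ∈ S_k with k ≥ 3, and let σ̂ be σ with its first two entries swapped. If σ̂ contains 231 as a classical pattern, then Sort(SC_σ) equals the set of permutations that avoid 132 classically and avoid rev(σ) consecutively. -/
open List Finset

attribute [local instance] Classical.propDecidable

/-- Two lists (with distinct entries) have the same relative order. -/
def SameRel (u v : List ℕ) : Prop :=
  u.length = v.length ∧ ∀ i j, i < j → j < u.length →
    (u.getD i 0 < u.getD j 0 ↔ v.getD i 0 < v.getD j 0)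

/-- `l` contains `σ` as a classical pattern. -/
def ContainsPat (l σ : List ℕ) : Prop := ∃ u, u.Sublist l ∧ SameRel u σ

/-- `l` contains `σ` as a consecutive pattern. -/
def ContainsC (l σ : List ℕ) : Prop := ∃ u, u.IsInfix l ∧ SameRel u σ

/-- `l` avoids `σ` as a classical pattern. -/
def AvoidsPat (l σ : List ℕ) : Prop := ¬ ContainsPat l σ

/-- `l` avoids `σ` as a consecutive pattern. -/
def AvoidsC (l σ : List ℕ) : Prop := ¬ ContainsC l σ

/-- Generic right-greedy stack-sorting: push the next entry unless doing so creates a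
`bad` stack (read top to bottom); otherwise pop the top of the stack to the output. -/
noncomputable def stackAux (bad : List ℕ → Prop) : List ℕ → List ℕ → List ℕ → List ℕ
  | [], stack, out => out ++ stack
  | a :: rest, stack, out =>
    if bad (a :: stack) then
      match stack with
      | [] => stackAux bad rest [a] out
      | b :: s => stackAux bad (a :: rest) s (out ++ [b])
    else stackAux bad rest (a :: stack) out
  termination_by i s _ => 2 * i.length + s.length
  decreasing_by all_goals (first | omega | (simp [List.length_cons]; try omega))

noncomputable def SCgen (bad : List ℕ → Prop) (π : List ℕ) : List ℕ := stackAux bad π [] []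

/-- The consecutive-`σ`-avoiding stack-sorting map. -/
noncomputable def SCc (σ : List ℕ) : List ℕ → List ℕ := SCgen (fun l => ContainsC l σ)

/-- The classical-`σ`-avoiding stack-sorting map. -/
noncomputable def sCl (σ : List ℕ) : List ℕ → List ℕ := SCgen (fun l => ContainsPat l σ)

/-- `π` is (the one-line notation of) a permutation of `{1, …, n}`. -/
def IsPermList (n : ℕ) (π : List ℕ) : Prop := π.Perm ((List.range n).map (· + 1))

/-- Complementation on permutations of `{1, …, n}`. -/
def compl (n : ℕ) (π : List ℕ) : List ℕ := π.map (fun x => n + 1 - x)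

/-- The finset of permutations of `{1, …, n}` in one-line notation. -/
def permsFinset (n : ℕ) : Finset (List ℕ) := ((List.range n).map (· + 1)).permutations.toFinset

/-- The number of preimages of `π` in `S_n` under `f`. -/
noncomputable def preCount (f : List ℕ → List ℕ) (n : ℕ) (π : List ℕ) : ℕ :=
  ((permsFinset n).filter (fun τ => f τ = π)).card

/-! If `π` avoids `rev σ` consecutively, the stack, which always holds a reversed prefix of
`π`, never contains `σ`: nothing is popped before the end and `SC_σ(π) = rev π`, which avoids
`231` exactly when `π` avoids `132`. Otherwise some entry is popped. Since the stack never
contains `σ`, at the last pop the incoming entry `x` and the stack `y :: s` form `x y t ≅ σ`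
with `t` a prefix of `s`; `y` is output, and as nothing is popped afterwards, `x` is output
next among these and then `t`. So `SC_σ(π)` contains `y x t ≅ σ̂`, hence `231`. -/

theorem IsPermList.nodup {n : ℕ} {π : List ℕ} (h : IsPermList n π) : π.Nodup :=
  h.nodup_iff.2 (List.nodup_range.map fun _ _ => Nat.add_right_cancel)

theorem sameRel_iff_getElem {u v : List ℕ} :
    SameRel u v ↔ ∃ hl : u.length = v.length, ∀ i j (hij : i < j) (hj : j < u.length),
      (u[i]'(hij.trans hj) < u[j] ↔ v[i]'(hl ▸ hij.trans hj) < v[j]'(hl ▸ hj)) := by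
  refine ⟨fun h => ⟨h.1, fun i j hij hj => ?_⟩, fun ⟨hl, h⟩ => ⟨hl, fun i j hij hj => ?_⟩⟩
  · simpa only [List.getD_eq_getElem _ _ (hij.trans hj), List.getD_eq_getElem _ _ hj,
      List.getD_eq_getElem _ _ (h.1 ▸ hij.trans hj), List.getD_eq_getElem _ _ (h.1 ▸ hj)]
      using h.2 i j hij hj
  · simpa only [List.getD_eq_getElem _ _ (hij.trans hj), List.getD_eq_getElem _ _ hj,
      List.getD_eq_getElem _ _ (hl ▸ hij.trans hj), List.getD_eq_getElem _ _ (hl ▸ hj)]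
      using h i j hij hj

theorem SameRel.trans {u v w : List ℕ} (huv : SameRel u v) (hvw : SameRel v w) :
    SameRel u w :=
  ⟨huv.1.trans hvw.1, fun i j hij hj => (huv.2 i j hij hj).trans (hvw.2 i j hij (huv.1 ▸ hj))⟩

theorem sameRel_map_of_strictMonoOn {u : List ℕ} {g : ℕ → ℕ}
    (hg : StrictMonoOn g {x | x ∈ u}) : SameRel u (u.map g) :=
  sameRel_iff_getElem.2 ⟨(List.length_map _).symm, fun i j hij hj => by
    simpa only [List.getElem_map] using
      (hg.lt_iff_lt (List.getElem_mem (hij.trans hj)) (List.getElem_mem hj)).symm⟩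

theorem SameRel.exists_strictMonoOn {u v : List ℕ} (hu : u.Nodup) (hv : v.Nodup)
    (h : SameRel u v) : ∃ g : ℕ → ℕ, StrictMonoOn g {x | x ∈ u} ∧ v = u.map g := by
  obtain ⟨hl, h⟩ := sameRel_iff_getElem.1 h
  have hidx : ∀ i (hi : i < u.length), v.getD (u.idxOf u[i]) 0 = v[i]'(hl ▸ hi) := by
    intro i hi
    rw [hu.idxOf_getElem, List.getD_eq_getElem]
  have hlt : ∀ i j (hi : i < u.length) (hj : j < u.length), u[i] < u[j] →
      v[i]'(hl ▸ hi) < v[j]'(hl ▸ hj) := by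
    intro i j hi hj hlt
    rcases lt_trichotomy i j with hij | rfl | hij
    · exact (h i j hij hj).1 hlt
    · exact absurd hlt (lt_irrefl _)
    · have hle := not_lt.1 (mt (h j i hij hi).2 (not_lt.2 hlt.le))
      exact lt_of_le_of_ne hle fun he => hij.ne' (hv.getElem_inj_iff.1 he)
  refine ⟨fun x => v.getD (u.idxOf x) 0, ?_, ?_⟩
  · intro x hx y hy hxy
    obtain ⟨i, hi, rfl⟩ := List.mem_iff_getElem.1 hx
    obtain ⟨j, hj, rfl⟩ := List.mem_iff_getElem.1 hy
    simp only [hidx]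
    exact hlt i j hi hj hxy
  · refine List.ext_getElem (by simp [hl]) fun i hi _ => ?_
    rw [List.getElem_map, hidx i (hl ▸ hi)]

theorem SameRel.reverse {u v : List ℕ} (hu : u.Nodup) (hv : v.Nodup) (h : SameRel u v) :
    SameRel u.reverse v.reverse := by
  obtain ⟨g, hg, rfl⟩ := h.exists_strictMonoOn hu hv
  rw [← List.map_reverse]
  exact sameRel_map_of_strictMonoOn (hg.mono fun _ => List.mem_reverse.1)

theorem SameRel.swap {x y p q : ℕ} {t r : List ℕ} (hu : (x :: y :: t).Nodup)
    (hv : (p :: q :: r).Nodup) (h : SameRel (x :: y :: t) (p :: q :: r)) :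
    SameRel (y :: x :: t) (q :: p :: r) := by
  obtain ⟨g, hg, hgv⟩ := h.exists_strictMonoOn hu hv
  simp only [List.map_cons, List.cons.injEq] at hgv
  obtain ⟨rfl, rfl, rfl⟩ := hgv
  exact sameRel_map_of_strictMonoOn (hg.mono fun z hz => by simp_all [or_left_comm])

theorem ContainsPat.trans {l m p : List ℕ} (hl : l.Nodup) (hm : m.Nodup)
    (hlm : ContainsPat l m) (hmp : ContainsPat m p) : ContainsPat l p := by
  obtain ⟨u, hul, hum⟩ := hlm
  obtain ⟨v, hvm, hvp⟩ := hmp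
  obtain ⟨g, hg, rfl⟩ := hum.exists_strictMonoOn (hul.nodup hl) hm
  obtain ⟨v', hv'u, rfl⟩ := List.sublist_map_iff.1 hvm
  exact ⟨v', hv'u.trans hul,
    (sameRel_map_of_strictMonoOn (hg.mono fun _ hx => hv'u.subset hx)).trans hvp⟩

theorem ContainsPat.reverse {l p : List ℕ} (hl : l.Nodup) (hp : p.Nodup)
    (h : ContainsPat l p) : ContainsPat l.reverse p.reverse := by
  obtain ⟨u, hul, hup⟩ := h
  exact ⟨u.reverse, List.reverse_sublist.2 hul, hup.reverse (hul.nodup hl) hp⟩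

theorem containsPat_reverse_iff {l p : List ℕ} (hl : l.Nodup) (hp : p.Nodup) :
    ContainsPat l.reverse p ↔ ContainsPat l p.reverse := by
  refine ⟨fun h => ?_, fun h => ?_⟩
  · simpa using h.reverse (List.nodup_reverse.2 hl) hp
  · simpa using h.reverse hl (List.nodup_reverse.2 hp)

theorem ContainsC.reverse {l p : List ℕ} (hl : l.Nodup) (hp : p.Nodup)
    (h : ContainsC l p) : ContainsC l.reverse p.reverse := by
  obtain ⟨u, hul, hup⟩ := h
  exact ⟨u.reverse, List.reverse_infix.2 hul, hup.reverse (hul.sublist.nodup hl) hp⟩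

theorem ContainsC.length_le {l p : List ℕ} (h : ContainsC l p) : p.length ≤ l.length := by
  obtain ⟨u, hul, hup⟩ := h
  exact hup.1 ▸ hul.length_le

theorem ContainsC.exists_prefix {x : ℕ} {l p : List ℕ} (h : ContainsC (x :: l) p)
    (hl : ¬ ContainsC l p) : ∃ u, u <+: x :: l ∧ SameRel u p := by
  obtain ⟨u, hu, hup⟩ := h
  rcases List.infix_cons_iff.1 hu with hu | hu
  · exact ⟨u, hu, hup⟩
  · exact absurd ⟨u, hu, hup⟩ hl

theorem stackAux_perm (bad : List ℕ → Prop) (input stack out : List ℕ) :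
    stackAux bad input stack out ~ out ++ input ++ stack := by
  induction input, stack, out using stackAux.induct bad with
  | case1 stack out => simp [stackAux]
  | case2 a rest out _ ih =>
    rw [stackAux.eq_def]
    simpa using ih.trans (List.perm_iff_count.2 fun x => by simp [List.count_cons])
  | case3 a rest out b s hbad ih =>
    rw [stackAux.eq_def]
    simpa [hbad] using ih.trans (List.perm_iff_count.2 fun x => by simp [List.count_cons]; omega)
  | case4 a rest stack out hpush ih =>
    rw [stackAux.eq_def]
    simpa [hpush] using ih.trans (List.perm_iff_count.2 fun x => by simp [List.count_cons]; omega)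

theorem stackAux_eq_of_forall_prefix (bad : List ℕ → Prop) {input stack : List ℕ}
    (h : ∀ p, p <+: input → ¬ bad (p.reverse ++ stack)) (out : List ℕ) :
    stackAux bad input stack out = out ++ input.reverse ++ stack := by
  induction input generalizing stack with
  | nil => simp [stackAux]
  | cons a rest ih =>
    have hpush : ¬ bad (a :: stack) := by
      simpa using h [a] (List.cons_prefix_cons.2 ⟨rfl, List.nil_prefix⟩)
    rw [stackAux.eq_def]
    simp only [hpush, if_false]
    rw [ih fun p hp => by simpa using h (a :: p) (List.cons_prefix_cons.2 ⟨rfl, hp⟩)]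
    simp

theorem containsPat_stackAux_swap {c d : ℕ} {τ : List ℕ} (hσ : (c :: d :: τ).Nodup)
    {input stack out : List ℕ} (hnodup : (input ++ stack).Nodup)
    (hstack : ¬ ContainsC stack (c :: d :: τ))
    (hpop : ∃ p, p <+: input ∧ ContainsC (p.reverse ++ stack) (c :: d :: τ)) :
    ContainsPat (stackAux (ContainsC · (c :: d :: τ)) input stack out) (d :: c :: τ) := by
  induction input, stack, out using stackAux.induct (ContainsC · (c :: d :: τ)) with
  | case1 stack out =>
    obtain ⟨p, hp, hc⟩ := hpop
    obtain rfl := List.prefix_nil.1 hp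
    exact absurd (by simpa using hc) hstack
  | case2 a rest out hbad _ =>
    simpa using hbad.length_le
  | case3 a rest out b s hbad ih =>
    rw [stackAux.eq_def]
    simp only [hbad, if_true]
    have hs : ¬ ContainsC s (c :: d :: τ) := fun ⟨u, hu, hup⟩ =>
      hstack ⟨u, hu.trans (List.suffix_cons b s).isInfix, hup⟩
    by_cases hnext : ∃ p, p <+: a :: rest ∧ ContainsC (p.reverse ++ s) (c :: d :: τ)
    · exact ih (hnodup.sublist (by simp)) hs hnext
    simp only [not_exists, not_and] at hnext
    -- `b` is the last entry ever popped: `a` is output after it and before the rest of `s`.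
    rw [stackAux_eq_of_forall_prefix _ hnext]
    obtain ⟨u, hu, hup⟩ := hbad.exists_prefix hstack
    obtain ⟨t, rfl, ht⟩ : ∃ t, u = a :: b :: t ∧ t <+: s := by
      rcases List.prefix_cons_iff.1 hu with rfl | ⟨u', rfl, hu'⟩
      · exact absurd hup.1 (by simp)
      rcases List.prefix_cons_iff.1 hu' with rfl | ⟨t, rfl, ht⟩
      · exact absurd hup.1 (by simp)
      exact ⟨t, rfl, ht⟩
    have hbt : b :: t <+ rest ++ b :: s :=
      (ht.sublist.cons_cons b).trans (List.sublist_append_right _ _)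
    refine ⟨b :: a :: t, ?_, hup.swap (hnodup.sublist (hbt.cons_cons a)) hσ⟩
    have hbat : b :: a :: t <+ b :: (rest.reverse ++ a :: s) :=
      ((ht.sublist.cons_cons a).trans (List.sublist_append_right _ _)).cons_cons b
    simpa using hbat.trans (List.sublist_append_right out _)
  | case4 a rest stack out hpush ih =>
    rw [stackAux.eq_def]
    simp only [hpush, if_false]
    obtain ⟨p, hp, hc⟩ := hpop
    rcases List.prefix_cons_iff.1 hp with rfl | ⟨p, rfl, hp'⟩
    · exact absurd (by simpa using hc) hstack
    · exact ih (List.nodup_middle.2 hnodup) hpush ⟨p, hp', by simpa using hc⟩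

theorem exists_prefix_containsC_reverse_iff {π σ : List ℕ} (hπ : π.Nodup) (hσ : σ.Nodup) :
    (∃ p, p <+: π ∧ ContainsC p.reverse σ) ↔ ContainsC π σ.reverse := by
  constructor
  · rintro ⟨p, hp, hc⟩
    obtain ⟨u, hu, hup⟩ := hc.reverse (List.nodup_reverse.2 (hp.sublist.nodup hπ)) hσ
    exact ⟨u, (List.reverse_reverse p ▸ hu).trans hp.isInfix, hup⟩
  · rintro ⟨u, ⟨l₁, l₂, rfl⟩, hup⟩
    have hu : u.Nodup := (List.sublist_append_right l₁ u).nodup (List.nodup_append.1 hπ).1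
    refine ⟨l₁ ++ u, List.prefix_append _ _, u.reverse, ?_, ?_⟩
    · simpa using (List.prefix_append u.reverse l₁.reverse).isInfix
    · simpa using hup.reverse hu (List.nodup_reverse.2 hσ)

theorem SCc_eq_reverse {π σ : List ℕ} (hπ : π.Nodup) (hσ : σ.Nodup)
    (h : AvoidsC π σ.reverse) : SCc σ π = π.reverse := by
  refine (stackAux_eq_of_forall_prefix _ (fun p hp hc => h ?_) []).trans (by simp)
  exact (exists_prefix_containsC_reverse_iff hπ hσ).1 ⟨p, hp, by simpa using hc⟩

theorem containsPat_SCc_swap {c d : ℕ} {τ π : List ℕ} (hπ : π.Nodup)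
    (hσ : (c :: d :: τ).Nodup) (h : ContainsC π (c :: d :: τ).reverse) :
    ContainsPat (SCc (c :: d :: τ) π) (d :: c :: τ) := by
  obtain ⟨p, hp, hc⟩ := (exists_prefix_containsC_reverse_iff hπ hσ).2 h
  exact containsPat_stackAux_swap hσ (by simpa using hπ) (fun hc => by simpa using hc.length_le)
    ⟨p, hp, by simpa using hc⟩

theorem sort_sc_eq_av_general (k : ℕ) (a b : ℕ) (rest : List ℕ) (σ : List ℕ)
    (hσdef : σ = a :: b :: rest) (hσ : IsPermList k σ)
    (hhat : ContainsPat (b :: a :: rest) [2, 3, 1])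
    (n : ℕ) (π : List ℕ) (hπ : IsPermList n π) :
    AvoidsPat (SCc σ π) [2, 3, 1] ↔ (AvoidsPat π [1, 3, 2] ∧ AvoidsC π σ.reverse) := by
  subst hσdef
  have hσnd := hσ.nodup
  have hπnd := hπ.nodup
  by_cases hC : AvoidsC π (a :: b :: rest).reverse
  · rw [SCc_eq_reverse hπnd hσnd hC, AvoidsPat, AvoidsPat,
      containsPat_reverse_iff hπnd (by decide)]
    exact (and_iff_left hC).symm
  · have hswap : (b :: a :: rest).Nodup := (List.Perm.swap a b rest).nodup_iff.2 hσnd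
    have hout : (SCc (a :: b :: rest) π).Nodup :=
      (stackAux_perm _ π [] []).nodup_iff.2 (by simpa using hπnd)
    have h231 := (containsPat_SCc_swap hπnd hσnd (not_not.1 hC)).trans hout hswap hhat
    exact iff_of_false (not_not.2 h231) fun h => hC h.2

/-- If σ ∈ S_k (k ≥ 3) and σ̂ contains 231 classically, then
Sort(SC_σ) = Av(132, rev(σ)-consecutive). -/
theorem sort_sc_eq_av (k : ℕ) (hk : 3 ≤ k) (a b : ℕ) (rest : List ℕ) (σ : List ℕ)
    (hσdef : σ = a :: b :: rest) (hσ : IsPermList k σ)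
    (hhat : ContainsPat (b :: a :: rest) [2, 3, 1])
    (n : ℕ) (π : List ℕ) (hπ : IsPermList n π) :
    AvoidsPat (SCc σ π) [2, 3, 1] ↔ (AvoidsPat π [1, 3, 2] ∧ AvoidsC π σ.reverse) :=
  sort_sc_eq_av_general k a b rest σ hσdef hσ hhat n π hπ
end

section
/- Let π ∈ S_n have ascending runs a_1, ..., a_k. For each i, let a_i^m be the subsequence of a_i with the first and last entries removed, and a_i^e be a_i with a_i^m removed. Then SC_{321}(π) = a_1^m a_2^m ··· a_k^m rev(a_k^e) rev(a_{k-1}^e) ··· rev(a_1^e). -/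
open List Finset

attribute [local instance] Classical.propDecidable

/-- `r` with its first and last entries removed. -/
def midRun (r : List ℕ) : List ℕ := (r.drop 1).dropLast

/-- The first and last entries of `r` (just `r` if it has length ≤ 1). -/
def endsRun (r : List ℕ) : List ℕ := if r.length ≤ 1 then r else [r.headD 0, r.getLastD 0]

/-- `rs` is the decomposition of `π` into its ascending runs. -/
def IsAscRuns (π : List ℕ) (rs : List (List ℕ)) : Prop :=
  π = rs.flatten ∧ (∀ r ∈ rs, r ≠ [] ∧ r.Chain' (· < ·)) ∧
    ∀ i, i + 1 < rs.length → (rs.getD (i + 1) []).headD 0 < (rs.getD i []).getLastD 0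

/-!
Pushing `a` onto a stack `b :: c :: _` (top first) creates a consecutive 321 exactly when
`b ≤ a` and `c ≤ b`. Read a run `x < y < z₁ < ⋯ < zₘ` with the stack top, if any, above `x`:
`x` and `y` are pushed, and each `zⱼ` pops the entry sitting on `x` and takes its place, so the
middle entries are output in order and the run leaves its last and first entries on top. The
next run starts below that top, so it is pushed without popping. At the end the stack holds the
reversed ends of the runs, the last run on top, and is emptied onto the output.
-/

/-- `SameRel` compares entries with `<` only, so ties count as descents. -/
def HasDescTriple (l : List ℕ) : Prop := ∃ x y z, [x, y, z] <:+: l ∧ y ≤ x ∧ z ≤ y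

lemma sameRel_321_iff (u : List ℕ) :
    SameRel u [3, 2, 1] ↔ ∃ x y z, u = [x, y, z] ∧ y ≤ x ∧ z ≤ y := by
  constructor
  · rintro ⟨hlen, h⟩
    match u, hlen with
    | [x, y, z], _ =>
      refine ⟨x, y, z, rfl, ?_, ?_⟩
      · simpa using h 0 1 (by norm_num) (by simp)
      · simpa using h 1 2 (by norm_num) (by simp)
  · rintro ⟨x, y, z, rfl, hyx, hzy⟩
    refine ⟨rfl, fun i j hij hj => ?_⟩
    simp only [List.length_cons, List.length_nil] at hj
    interval_cases j <;> interval_cases i <;> simp <;> omega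

lemma containsC_321_iff (l : List ℕ) : ContainsC l [3, 2, 1] ↔ HasDescTriple l := by
  simp only [ContainsC, sameRel_321_iff, HasDescTriple]
  constructor
  · rintro ⟨_, hinf, x, y, z, rfl, hyx, hzy⟩
    exact ⟨x, y, z, hinf, hyx, hzy⟩
  · rintro ⟨x, y, z, hinf, hyx, hzy⟩
    exact ⟨[x, y, z], hinf, x, y, z, rfl, hyx, hzy⟩

lemma hasDescTriple_cons_iff (a : ℕ) (l : List ℕ) :
    HasDescTriple (a :: l) ↔
      (∃ y z t, l = y :: z :: t ∧ y ≤ a ∧ z ≤ y) ∨ HasDescTriple l := by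
  constructor
  · rintro ⟨x, y, z, hinf, hyx, hzy⟩
    rcases List.infix_cons_iff.1 hinf with ⟨t, ht⟩ | hinf
    · simp only [List.cons_append, List.nil_append, List.cons.injEq] at ht
      obtain ⟨rfl, ht⟩ := ht
      exact Or.inl ⟨y, z, t, ht.symm, hyx, hzy⟩
    · exact Or.inr ⟨x, y, z, hinf, hyx, hzy⟩
  · rintro (⟨y, z, t, rfl, hya, hzy⟩ | ⟨x, y, z, hinf, hyx, hzy⟩)
    · exact ⟨a, y, z, ⟨[], t, rfl⟩, hya, hzy⟩
    · exact ⟨x, y, z, hinf.trans (List.suffix_cons a l).isInfix, hyx, hzy⟩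

lemma not_hasDescTriple_nil : ¬ HasDescTriple [] := by
  rintro ⟨x, y, z, hinf, -⟩
  simpa using hinf.length_le

lemma not_hasDescTriple_cons {a : ℕ} {S : List ℕ} (hS : ¬ HasDescTriple S)
    (ha : ∀ b ∈ S.head?, a < b) : ¬ HasDescTriple (a :: S) := by
  rw [hasDescTriple_cons_iff]
  rintro (⟨y, z, t, rfl, hya, -⟩ | h)
  · exact absurd (ha y rfl) (not_lt.2 hya)
  · exact hS h

lemma not_hasDescTriple_cons_cons (a : ℕ) {b : ℕ} {S : List ℕ}
    (hS : ¬ HasDescTriple (b :: S)) (hb : ∀ c ∈ S.head?, b < c) :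
    ¬ HasDescTriple (a :: b :: S) := by
  rw [hasDescTriple_cons_iff]
  rintro (⟨y, z, t, h, -, hzy⟩ | h)
  · simp only [List.cons.injEq] at h
    obtain ⟨rfl, rfl⟩ := h
    exact absurd (hb z rfl) (not_lt.2 hzy)
  · exact hS h

section StackAux

variable {bad : List ℕ → Prop}

lemma stackAux_nil_input (S O : List ℕ) : stackAux bad [] S O = O ++ S := by
  rw [stackAux.eq_def]

lemma stackAux_cons_of_not_bad {a : ℕ} {S : List ℕ} (h : ¬ bad (a :: S)) (rest O : List ℕ) :
    stackAux bad (a :: rest) S O = stackAux bad rest (a :: S) O := by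
  rw [stackAux.eq_def]; exact if_neg h

lemma stackAux_cons_of_bad {a b : ℕ} {S : List ℕ} (h : bad (a :: b :: S)) (rest O : List ℕ) :
    stackAux bad (a :: rest) (b :: S) O = stackAux bad (a :: rest) S (O ++ [b]) := by
  rw [stackAux.eq_def]; exact if_pos h

end StackAux

lemma stackAux_ascending_tail {l : List ℕ} (hl : l ≠ []) {x y : ℕ}
    (hch : (y :: l).IsChain (· < ·)) (hxy : x < y) {S : List ℕ} (hx : ∀ c ∈ S.head?, x < c)
    (hxS : ¬ HasDescTriple (x :: S)) (rest O : List ℕ) :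
    stackAux HasDescTriple (l ++ rest) (y :: x :: S) O =
      stackAux HasDescTriple rest (l.getLastD 0 :: x :: S) (O ++ y :: l.dropLast) := by
  induction l generalizing y O with
  | nil => exact absurd rfl hl
  | cons z l ih =>
    have hyz : y < z := (List.isChain_cons_cons.1 hch).1
    have hpop : HasDescTriple (z :: y :: x :: S) :=
      (hasDescTriple_cons_iff _ _).2 (Or.inl ⟨y, x, S, rfl, hyz.le, hxy.le⟩)
    rw [List.cons_append, stackAux_cons_of_bad hpop,
      stackAux_cons_of_not_bad (not_hasDescTriple_cons_cons z hxS hx)]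
    rcases eq_or_ne l [] with rfl | hl'
    · simp
    · obtain ⟨w, l', rfl⟩ := List.exists_cons_of_ne_nil hl'
      rw [ih hl' (List.isChain_cons_cons.1 hch).2 (hxy.trans hyz)]
      simp

lemma stackAux_run {r : List ℕ} (hr : r ≠ []) (hch : r.IsChain (· < ·)) {S : List ℕ}
    (hS : ¬ HasDescTriple S) (htop : ∀ b ∈ S.head?, r.headD 0 < b) (rest O : List ℕ) :
    stackAux HasDescTriple (r ++ rest) S O =
      stackAux HasDescTriple rest ((endsRun r).reverse ++ S) (O ++ midRun r) := by
  obtain ⟨x, l, rfl⟩ := List.exists_cons_of_ne_nil hr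
  have hx : ¬ HasDescTriple (x :: S) := not_hasDescTriple_cons hS htop
  rw [List.cons_append, stackAux_cons_of_not_bad hx]
  rcases l with _ | ⟨y, l⟩
  · simp [endsRun, midRun]
  have hxy : x < y := (List.isChain_cons_cons.1 hch).1
  rw [List.cons_append, stackAux_cons_of_not_bad (not_hasDescTriple_cons_cons y hx htop)]
  rcases eq_or_ne l [] with rfl | hl
  · simp [endsRun, midRun]
  · obtain ⟨z, l', rfl⟩ := List.exists_cons_of_ne_nil hl
    rw [stackAux_ascending_tail hl (List.isChain_cons_cons.1 hch).2 hxy htop hx]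
    simp [endsRun, midRun]

lemma head?_reverse_endsRun_append {r : List ℕ} (hr : r ≠ []) (S : List ℕ) :
    ((endsRun r).reverse ++ S).head? = some (r.getLastD 0) := by
  rcases r with _ | ⟨x, _ | ⟨y, l⟩⟩
  · exact absurd rfl hr
  all_goals simp [endsRun]

lemma not_hasDescTriple_reverse_endsRun_append {r : List ℕ} (hr : r ≠ [])
    (hch : r.IsChain (· < ·)) {S : List ℕ} (hS : ¬ HasDescTriple S)
    (htop : ∀ b ∈ S.head?, r.headD 0 < b) : ¬ HasDescTriple ((endsRun r).reverse ++ S) := by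
  obtain ⟨x, l, rfl⟩ := List.exists_cons_of_ne_nil hr
  have hx : ¬ HasDescTriple (x :: S) := not_hasDescTriple_cons hS htop
  rcases l with _ | ⟨y, l⟩
  · simpa [endsRun] using hx
  · simpa [endsRun] using not_hasDescTriple_cons_cons ((x :: y :: l).getLastD 0) hx htop

lemma stackAux_runs {rs : List (List ℕ)} (hruns : ∀ r ∈ rs, r ≠ [] ∧ r.IsChain (· < ·))
    (hdesc : ∀ i, i + 1 < rs.length → (rs.getD (i + 1) []).headD 0 < (rs.getD i []).getLastD 0)
    {S : List ℕ} (hS : ¬ HasDescTriple S)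
    (htop : ∀ r ∈ rs.head?, ∀ b ∈ S.head?, r.headD 0 < b) (O : List ℕ) :
    stackAux HasDescTriple rs.flatten S O =
      O ++ (rs.map midRun).flatten ++
        ((rs.reverse.map (fun r => (endsRun r).reverse)).flatten ++ S) := by
  induction rs generalizing S O with
  | nil => simp [stackAux_nil_input]
  | cons r rs ih =>
    obtain ⟨hr, hch⟩ := hruns r (by simp)
    have htop' : ∀ b ∈ S.head?, r.headD 0 < b := htop r rfl
    rw [List.flatten_cons, stackAux_run hr hch hS htop',
      ih (fun q hq => hruns q (by simp [hq])) (fun i hi => by simpa using hdesc (i + 1) (by simpa))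
        (not_hasDescTriple_reverse_endsRun_append hr hch hS htop')]
    · simp
    · rintro q hq b hb
      obtain rfl : r.getLastD 0 = b := by simpa [head?_reverse_endsRun_append hr] using hb
      cases rs with
      | nil => simp at hq
      | cons q' qs =>
        obtain rfl : q' = q := by simpa using hq
        simpa using hdesc 0 (by simp)

theorem sc321_formula_general (π : List ℕ)
    (rs : List (List ℕ)) (hrs : IsAscRuns π rs) :
    SCc [3, 2, 1] π =
      (rs.map midRun).flatten ++ (rs.reverse.map (fun r => (endsRun r).reverse)).flatten := by
  obtain ⟨rfl, hruns, hdesc⟩ := hrs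
  have hbad : (fun l => ContainsC l [3, 2, 1]) = HasDescTriple :=
    funext fun l => propext (containsC_321_iff l)
  rw [SCc, SCgen, hbad, stackAux_runs hruns hdesc not_hasDescTriple_nil (by simp)]
  simp

/-- If π has ascending runs a_1, …, a_k then
SC_{321}(π) = a_1^m ⋯ a_k^m rev(a_k^e) ⋯ rev(a_1^e). -/
theorem sc321_formula (n : ℕ) (π : List ℕ) (hπ : IsPermList n π)
    (rs : List (List ℕ)) (hrs : IsAscRuns π rs) :
    SCc [3, 2, 1] π =
      (rs.map midRun).flatten ++ (rs.reverse.map (fun r => (endsRun r).reverse)).flatten :=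
  sc321_formula_general π rs hrs
end
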